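/- Let k ≥ r ≥ 2 be integers. Let G be an r-uniform hypergraph and H an r-uniform hypergraph on k vertices with N_ind(H,G) > 0. Suppose δ ≥ 0 is such that for every pair of linear orderings ord_G of V(G) and ord_H of V(H), |N_ord(H,G)/N_ind(H,G) − 1/k!| ≤ δ. Let μ_G and μ_H be probability measures on the linear orderings of V(G) and V(H), respectively, such that for every embedding φ of H in G, the pull-back of μ_G under φ equals μ_H. Then d_TV(μ_H, ν_H) ≤ δ·k!/2, where ν_H is the uniform probability measure on linear orderings of V(H). -/

import Mathlib

open Finset

/-- The linear orderings of a finite set `V ⊆ ℕ`, represented as the lists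
enumerating the elements of `V` exactly once. -/
def Orderings (V : Finset ℕ) : Finset (List ℕ) :=
  (V.sort (· ≤ ·)).permutations.toFinset

/-- An `r`-uniform hypergraph on a finite vertex set `V ⊆ ℕ`: a set of
`r`-element subsets of `V`.  For `r = 2` this is exactly a finite simple graph. -/
structure FinHypergraph (r : ℕ) where
  verts : Finset ℕ
  edges : Finset (Finset ℕ)
  card_edge : ∀ e ∈ edges, e.card = r
  edge_subset : ∀ e ∈ edges, e ⊆ verts

namespace FinHypergraph

/-- `H` is an induced subhypergraph of `G`. -/
def IsInduced {r : ℕ} (H G : FinHypergraph r) : Prop :=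
  H.verts ⊆ G.verts ∧ ∀ e : Finset ℕ, e ⊆ H.verts → (e ∈ H.edges ↔ e ∈ G.edges)

/-- `φ` is an isomorphism from `G` onto `G'`. -/
def IsIso {r : ℕ} (G G' : FinHypergraph r) (φ : ℕ → ℕ) : Prop :=
  Set.InjOn φ G.verts ∧ G.verts.image φ = G'.verts ∧
    ∀ e : Finset ℕ, e ⊆ G.verts → (e ∈ G.edges ↔ e.image φ ∈ G'.edges)

end FinHypergraph

/-- A consistent random ordering on a class `𝒞` of `r`-uniform hypergraphs:
an isomorphism-invariant assignment, to each hypergraph `G` in the class, of a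
probability measure `μ G` on the linear orderings of its vertex set, compatible
with restriction to induced subhypergraphs. -/
structure ConsistentRandomOrdering {r : ℕ} (𝒞 : Set (FinHypergraph r)) where
  μ : FinHypergraph r → List ℕ → ℝ
  nonneg : ∀ G l, 0 ≤ μ G l
  supported : ∀ G ∈ 𝒞, ∀ l : List ℕ, l ∉ Orderings G.verts → μ G l = 0
  total : ∀ G ∈ 𝒞, ∑ l ∈ Orderings G.verts, μ G l = 1
  iso_invariant : ∀ G ∈ 𝒞, ∀ G' ∈ 𝒞, ∀ φ : ℕ → ℕ, G.IsIso G' φ →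
    ∀ l ∈ Orderings G.verts, μ G' (l.map φ) = μ G l
  restriction : ∀ G ∈ 𝒞, ∀ H ∈ 𝒞, H.IsInduced G → ∀ m ∈ Orderings H.verts,
    μ H m = ∑ l ∈ (Orderings G.verts).filter
      (fun l => l.filter (fun x => decide (x ∈ H.verts)) = m), μ G l

/-- Embeddings of `H` into `G`: isomorphisms of `H` onto an induced subhypergraph
of `G`, normalized to be the identity off the vertex set of `H` (so that they
form a finite set which counts embeddings exactly once each). -/
def Embs {r : ℕ} (H G : FinHypergraph r) : Set (ℕ → ℕ) :=
  {φ | Set.InjOn φ H.verts ∧ (∀ x ∈ H.verts, φ x ∈ G.verts) ∧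
    (∀ e : Finset ℕ, e ⊆ H.verts → (e ∈ H.edges ↔ e.image φ ∈ G.edges)) ∧
    (∀ x, x ∉ H.verts → φ x = x)}

/-- `N_ind(H,G)`: the number of embeddings of `H` into `G`. -/
noncomputable def Nind {r : ℕ} (H G : FinHypergraph r) : ℕ := (Embs H G).ncard

/-- An embedding `φ` of `H` preserves the orderings `ordH` (of `V(H)`) and
`ordG` (of `V(G)`) if the restriction of `ordG` to the image of `φ` is the
`φ`-image of `ordH`, i.e. the pull-back of `ordG` under `φ` is `ordH`. -/
def Preserves {r : ℕ} (H : FinHypergraph r) (φ : ℕ → ℕ) (ordH ordG : List ℕ) : Prop :=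
  ordG.filter (fun x => decide (x ∈ H.verts.image φ)) = ordH.map φ

instance {r : ℕ} (H : FinHypergraph r) (φ : ℕ → ℕ) (ordH ordG : List ℕ) :
    Decidable (Preserves H φ ordH ordG) :=
  decidable_of_iff (ordG.filter (fun x => decide (x ∈ H.verts.image φ)) = ordH.map φ)
    Iff.rfl

/-- `N_ord(H,G)`: the number of embeddings of `H` into `G` preserving the given
pair of orderings. -/
noncomputable def Nord {r : ℕ} (H G : FinHypergraph r) (ordH ordG : List ℕ) : ℕ :=
  {φ ∈ Embs H G | Preserves H φ ordH ordG}.ncard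

/-! Averaging the pull-back identity `μ_H = φ* μ_G` over all embeddings `φ` writes `μ_H(ord_H)`
as the `μ_G`-average of the ratios `N_ord(H, G; ord_H, ord_G) / N_ind(H, G)`.  These ratios all
lie within `δ` of `1/k!`, hence so does each of the `k!` atoms of `μ_H`. -/

theorem card_orderings (V : Finset ℕ) : #(Orderings V) = V.card.factorial := by
  rw [Orderings, List.toFinset_card_of_nodup (List.nodup_permutations _ (sort_nodup _ _)),
    List.length_permutations, length_sort]

theorem Finset.sum_sum_filter_eq_sum_card_filter_smul {α β M : Type*} [AddCommMonoid M]
    (s : Finset α) (t : Finset β) (p : α → β → Prop) [∀ a b, Decidable (p a b)] (f : β → M) :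
    ∑ a ∈ s, ∑ b ∈ t with p a b, f b = ∑ b ∈ t, #{a ∈ s | p a b} • f b := by
  simp only [sum_filter]
  rw [sum_comm]
  simp only [← sum_filter, sum_const]

section Embeddings

variable {r : ℕ} {H G : FinHypergraph r}

theorem Nord_eq_card_filter (hfin : (Embs H G).Finite) (ordH ordG : List ℕ) :
    Nord H G ordH ordG = #{φ ∈ hfin.toFinset | Preserves H φ ordH ordG} := by
  rw [Nord, ← Set.ncard_coe_finset]
  congr 1
  ext φ
  simp

theorem eq_sum_mul_Nord_div_Nind_of_pullback (hpos : 0 < Nind H G) {μG μH : List ℕ → ℝ}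
    {ordH : List ℕ} (hordH : ordH ∈ Orderings H.verts)
    (hpull : ∀ φ ∈ Embs H G, ∀ ordH ∈ Orderings H.verts,
      μH ordH = ∑ ordG ∈ (Orderings G.verts).filter (fun l => Preserves H φ ordH l), μG ordG) :
    μH ordH = ∑ ordG ∈ Orderings G.verts,
      μG ordG * ((Nord H G ordH ordG : ℝ) / (Nind H G : ℝ)) := by
  have hfin : (Embs H G).Finite := Set.finite_of_ncard_pos hpos
  have hNind : (Nind H G : ℝ) = #hfin.toFinset := by
    rw [Nind, Set.ncard_eq_toFinset_card _ hfin]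
  have hcount : (Nind H G : ℝ) * μH ordH
      = ∑ ordG ∈ Orderings G.verts, (Nord H G ordH ordG : ℝ) * μG ordG :=
    calc (Nind H G : ℝ) * μH ordH
        = ∑ φ ∈ hfin.toFinset, ∑ ordG ∈ Orderings G.verts with Preserves H φ ordH ordG,
            μG ordG := by
          rw [hNind, ← nsmul_eq_mul, ← sum_const]
          exact sum_congr rfl fun φ hφ => hpull φ (hfin.mem_toFinset.mp hφ) ordH hordH
      _ = ∑ ordG ∈ Orderings G.verts, (Nord H G ordH ordG : ℝ) * μG ordG := by
          simp only [sum_sum_filter_eq_sum_card_filter_smul, Nord_eq_card_filter hfin,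
            nsmul_eq_mul]
  have hNind_ne : (Nind H G : ℝ) ≠ 0 := by exact_mod_cast hpos.ne'
  rw [← mul_div_cancel_left₀ (μH ordH) hNind_ne, hcount, sum_div]
  exact sum_congr rfl fun _ _ => by ring

end Embeddings

theorem uniqueErgodicity.stmt3_general (r k : ℕ)
    (H G : FinHypergraph r) (hk : H.verts.card = k) (hpos : 0 < Nind H G)
    (δ : ℝ)
    (hbd : ∀ ordG ∈ Orderings G.verts, ∀ ordH ∈ Orderings H.verts,
      |(Nord H G ordH ordG : ℝ) / (Nind H G : ℝ) - ((k.factorial : ℝ))⁻¹| ≤ δ)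
    (μG μH : List ℕ → ℝ)
    (hGnonneg : ∀ l, 0 ≤ μG l)
    (hGtotal : ∑ l ∈ Orderings G.verts, μG l = 1)
    (hpull : ∀ φ ∈ Embs H G, ∀ ordH ∈ Orderings H.verts,
      μH ordH = ∑ ordG ∈ (Orderings G.verts).filter (fun l => Preserves H φ ordH l),
        μG ordG) :
    (1 / 2) * ∑ ordH ∈ Orderings H.verts, |μH ordH - ((k.factorial : ℝ))⁻¹|
      ≤ δ * (k.factorial : ℝ) / 2 := by
  have hatom : ∀ ordH ∈ Orderings H.verts, |μH ordH - ((k.factorial : ℝ))⁻¹| ≤ δ := by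
    intro ordH hordH
    rw [← Real.dist_eq, ← Metric.mem_closedBall,
      eq_sum_mul_Nord_div_Nind_of_pullback hpos hordH hpull]
    exact (convex_closedBall _ δ).sum_mem (fun l _ => hGnonneg l) hGtotal
      fun ordG hordG => hbd ordG hordG ordH hordH
  have hsum := sum_le_sum hatom
  rw [sum_const, card_orderings, hk, nsmul_eq_mul] at hsum
  linarith

/-- Key averaging lemma: if all ordered-embedding counts of `H` in `G` are within
`δ` of the uniform proportion `1/k!`, and `μ_G` pulls back to `μ_H` under every
embedding of `H` in `G`, then `μ_H` is within `δ·k!/2` of uniform in total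
variation. -/
theorem uniqueErgodicity.stmt3 (r k : ℕ) (hr : 2 ≤ r) (hrk : r ≤ k)
    (H G : FinHypergraph r) (hk : H.verts.card = k) (hpos : 0 < Nind H G)
    (δ : ℝ) (hδ : 0 ≤ δ)
    (hbd : ∀ ordG ∈ Orderings G.verts, ∀ ordH ∈ Orderings H.verts,
      |(Nord H G ordH ordG : ℝ) / (Nind H G : ℝ) - ((k.factorial : ℝ))⁻¹| ≤ δ)
    (μG μH : List ℕ → ℝ)
    (hGnonneg : ∀ l, 0 ≤ μG l) (hGsupp : ∀ l ∉ Orderings G.verts, μG l = 0)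
    (hGtotal : ∑ l ∈ Orderings G.verts, μG l = 1)
    (hHnonneg : ∀ l, 0 ≤ μH l) (hHsupp : ∀ l ∉ Orderings H.verts, μH l = 0)
    (hHtotal : ∑ l ∈ Orderings H.verts, μH l = 1)
    (hpull : ∀ φ ∈ Embs H G, ∀ ordH ∈ Orderings H.verts,
      μH ordH = ∑ ordG ∈ (Orderings G.verts).filter (fun l => Preserves H φ ordH l),
        μG ordG) :
    (1 / 2) * ∑ ordH ∈ Orderings H.verts, |μH ordH - ((k.factorial : ℝ))⁻¹|
      ≤ δ * (k.factorial : ℝ) / 2 :=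
  uniqueErgodicity.stmt3_general r k H G hk hpos δ hbd μG μH hGnonneg hGtotal hpull
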